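/- For a semicopula S, the inequality I_S(μ, (f+a)·1_A) ≤ I_S(μ, f·1_A) + I_S(μ, a·1_A) holds for all a, A, μ, f (with f + a ∈ [0,1]) if and only if S(x+y, z) ≤ S(x, z) + S(y, z) for all x, y, z ∈ [0,1] with x + y ≤ 1. -/

import Mathlib

open Set

def Semicopula (S : ℝ → ℝ → ℝ) : Prop :=
  (∀ x ∈ Icc (0:ℝ) 1, ∀ y ∈ Icc (0:ℝ) 1, S x y ∈ Icc (0:ℝ) 1) ∧
  (∀ x ∈ Icc (0:ℝ) 1, ∀ y ∈ Icc (0:ℝ) 1, ∀ y' ∈ Icc (0:ℝ) 1, y ≤ y' → S x y ≤ S x y') ∧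
  (∀ y ∈ Icc (0:ℝ) 1, ∀ x ∈ Icc (0:ℝ) 1, ∀ x' ∈ Icc (0:ℝ) 1, x ≤ x' → S x y ≤ S x' y) ∧
  (∀ x ∈ Icc (0:ℝ) 1, S x 1 = x ∧ S 1 x = x)

def Capacity {X : Type} (μ : Set X → ℝ) : Prop :=
  (∀ A : Set X, μ A ∈ Icc (0:ℝ) 1) ∧ (∀ A B : Set X, A ⊆ B → μ A ≤ μ B) ∧
  μ (∅ : Set X) = 0 ∧ μ (univ : Set X) = 1

noncomputable def genInt {X : Type} (S : ℝ → ℝ → ℝ) (μ : Set X → ℝ) (f : X → ℝ) : ℝ :=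
  ⨆ t : Icc (0:ℝ) 1, S (t:ℝ) (μ {x | (t:ℝ) ≤ f x})

def Comonotone {X : Type} (f g : X → ℝ) : Prop :=
  ∀ x y, 0 ≤ (f x - f y) * (g x - g y)

def Tcoseminorm (op : ℝ → ℝ → ℝ) : Prop :=
  ∃ S : ℝ → ℝ → ℝ, Semicopula S ∧
    ∀ x ∈ Icc (0:ℝ) 1, ∀ y ∈ Icc (0:ℝ) 1, op x y = 1 - S (1 - x) (1 - y)

/-!
If `S` is subadditive in its first argument, cut a level `t > a` of `(f + a)·1_A` as
`t = (t - a) + a`: its level set lies in the `(t - a)`-level set of `f·1_A` and in the `a`-level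
set of `a·1_A`, so `S(t, μ E) ≤ S(t - a, μ E) + S(a, μ E)` is bounded by the two integrals.
Conversely, `I_S(μ, c·1_A) = S(c, μ A)`, so the inequality applied to constants `x`, `y` on a set
of capacity `z` is exactly `S(x + y, z) ≤ S(x, z) + S(y, z)`; such a set is `{true}` for a
two-point capacity on `Bool`.
-/

namespace Semicopula

variable {S : ℝ → ℝ → ℝ}

lemma nonneg (hS : Semicopula S) {x y : ℝ} (hx : x ∈ Icc (0:ℝ) 1) (hy : y ∈ Icc (0:ℝ) 1) :
    0 ≤ S x y :=
  (hS.1 x hx y hy).1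

lemma mono_right (hS : Semicopula S) {x y y' : ℝ} (hx : x ∈ Icc (0:ℝ) 1)
    (hy : y ∈ Icc (0:ℝ) 1) (hy' : y' ∈ Icc (0:ℝ) 1) (hyy' : y ≤ y') : S x y ≤ S x y' :=
  hS.2.1 x hx y hy y' hy' hyy'

lemma mono_left (hS : Semicopula S) {x x' y : ℝ} (hx : x ∈ Icc (0:ℝ) 1)
    (hx' : x' ∈ Icc (0:ℝ) 1) (hy : y ∈ Icc (0:ℝ) 1) (hxx' : x ≤ x') : S x y ≤ S x' y :=
  hS.2.2.1 y hy x hx x' hx' hxx'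

lemma zero_left (hS : Semicopula S) {y : ℝ} (hy : y ∈ Icc (0:ℝ) 1) : S 0 y = 0 := by
  have h0 : (0:ℝ) ∈ Icc (0:ℝ) 1 := by norm_num
  have h1 : (1:ℝ) ∈ Icc (0:ℝ) 1 := by norm_num
  refine le_antisymm ?_ (hS.nonneg h0 hy)
  calc S 0 y ≤ S 0 1 := hS.mono_right h0 hy h1 hy.2
    _ = 0 := (hS.2.2.2 0 h0).1

lemma zero_right (hS : Semicopula S) {x : ℝ} (hx : x ∈ Icc (0:ℝ) 1) : S x 0 = 0 := by
  have h0 : (0:ℝ) ∈ Icc (0:ℝ) 1 := by norm_num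
  have h1 : (1:ℝ) ∈ Icc (0:ℝ) 1 := by norm_num
  refine le_antisymm ?_ (hS.nonneg hx h0)
  calc S x 0 ≤ S 1 0 := hS.mono_left hx h1 h0 hx.2
    _ = 0 := (hS.2.2.2 0 h0).2

end Semicopula

section genInt

variable {X : Type} {S : ℝ → ℝ → ℝ} {μ : Set X → ℝ}

lemma genInt_le {f : X → ℝ} {c : ℝ}
    (h : ∀ t ∈ Icc (0:ℝ) 1, S t (μ {x | t ≤ f x}) ≤ c) : genInt S μ f ≤ c :=
  have : Nonempty (Icc (0:ℝ) 1) := nonempty_Icc_subtype zero_le_one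
  ciSup_le fun t => h t t.2

lemma le_genInt_of_subset (hS : Semicopula S) (hμ : Capacity μ) {f : X → ℝ} {t : ℝ}
    (ht : t ∈ Icc (0:ℝ) 1) {E : Set X} (hE : E ⊆ {x | t ≤ f x}) :
    S t (μ E) ≤ genInt S μ f := by
  have hbdd : BddAbove (range fun s : Icc (0:ℝ) 1 => S s (μ {x | (s:ℝ) ≤ f x})) :=
    ⟨1, by rintro _ ⟨s, rfl⟩; exact (hS.1 s s.2 _ (hμ.1 _)).2⟩
  calc S t (μ E) ≤ S t (μ {x | t ≤ f x}) :=
        hS.mono_right ht (hμ.1 _) (hμ.1 _) (hμ.2.1 _ _ hE)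
    _ ≤ genInt S μ f := le_ciSup hbdd ⟨t, ht⟩

lemma genInt_nonneg (hS : Semicopula S) (hμ : Capacity μ) (f : X → ℝ) : 0 ≤ genInt S μ f :=
  (hS.nonneg (by norm_num) (hμ.1 _)).trans
    (le_genInt_of_subset hS hμ (by norm_num : (0:ℝ) ∈ Icc (0:ℝ) 1) subset_rfl)

lemma setOf_le_indicator_subset {A : Set X} {g h : X → ℝ} {s t : ℝ} (hst : s ≤ t)
    (hgh : ∀ x ∈ A, t ≤ g x → s ≤ h x) :
    {x | t ≤ A.indicator g x} ⊆ {x | s ≤ A.indicator h x} := by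
  intro x hx
  by_cases hxA : x ∈ A
  · simp_all [indicator_of_mem]
  · simp_all only [mem_ofPred_eq, indicator_of_notMem hxA]
    exact hst.trans hx

lemma genInt_indicator_const (hS : Semicopula S) (hμ : Capacity μ) (A : Set X) {c : ℝ}
    (hc : c ∈ Icc (0:ℝ) 1) : genInt S μ (A.indicator fun _ => c) = S c (μ A) := by
  refine le_antisymm (genInt_le fun t ht => ?_)
    (le_genInt_of_subset hS hμ hc fun x hx => by simp [indicator_of_mem hx])
  rcases ht.1.eq_or_lt with rfl | ht₀
  · rw [hS.zero_left (hμ.1 _)]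
    exact hS.nonneg hc (hμ.1 A)
  by_cases htc : t ≤ c
  · have hsub : {x | t ≤ A.indicator (fun _ => c) x} ⊆ A := fun x hx => by
      by_contra hxA
      simp only [mem_ofPred_eq, indicator_of_notMem hxA] at hx
      linarith
    exact (hS.mono_right ht (hμ.1 _) (hμ.1 A) (hμ.2.1 _ _ hsub)).trans
      (hS.mono_left ht hc (hμ.1 A) htc)
  · have hempty : {x | t ≤ A.indicator (fun _ => c) x} = ∅ := by
      ext x
      simp only [mem_ofPred_eq, mem_empty_iff_false, iff_false, not_le]
      rcases em (x ∈ A) with hxA | hxA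
      · simpa [indicator_of_mem hxA] using htc
      · simpa [indicator_of_notMem hxA] using ht₀
    rw [hempty, hμ.2.2.1, hS.zero_right ht]
    exact hS.nonneg hc (hμ.1 A)

lemma genInt_indicator_add_const_le (hS : Semicopula S) (hμ : Capacity μ)
    (hadd : ∀ x ∈ Icc (0:ℝ) 1, ∀ y ∈ Icc (0:ℝ) 1, ∀ z ∈ Icc (0:ℝ) 1,
      x + y ≤ 1 → S (x + y) z ≤ S x z + S y z)
    (A : Set X) (f : X → ℝ) {a : ℝ} (ha : a ∈ Icc (0:ℝ) 1) :
    genInt S μ (A.indicator fun x => f x + a) ≤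
      genInt S μ (A.indicator f) + genInt S μ (A.indicator fun _ => a) := by
  refine genInt_le fun t ht => ?_
  set E := {x | t ≤ A.indicator (fun x => f x + a) x}
  by_cases hta : t ≤ a
  · have hE : E ⊆ {x | t ≤ A.indicator (fun _ => a) x} :=
      setOf_le_indicator_subset le_rfl fun _ _ _ => hta
    linarith [le_genInt_of_subset hS hμ ht hE, genInt_nonneg hS hμ (A.indicator f)]
  · have hu : t - a ∈ Icc (0:ℝ) 1 := ⟨by linarith, by linarith [ht.2, ha.1]⟩
    have hEf : E ⊆ {x | t - a ≤ A.indicator f x} :=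
      setOf_le_indicator_subset (by linarith [ha.1]) fun _ _ h => by linarith
    have hEa : E ⊆ {x | a ≤ A.indicator (fun _ => a) x} :=
      setOf_le_indicator_subset (by linarith) fun _ _ _ => le_rfl
    calc S t (μ E) = S ((t - a) + a) (μ E) := by rw [sub_add_cancel]
      _ ≤ S (t - a) (μ E) + S a (μ E) := hadd _ hu _ ha _ (hμ.1 E) (by linarith [ht.2])
      _ ≤ _ := add_le_add (le_genInt_of_subset hS hμ hu hEf)
          (le_genInt_of_subset hS hμ ha hEa)

end genInt

open Classical in
noncomputable def boolCapacity (z : ℝ) : Set Bool → ℝ := fun B =>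
  if true ∈ B then (if false ∈ B then 1 else z) else 0

lemma capacity_boolCapacity {z : ℝ} (hz : z ∈ Icc (0:ℝ) 1) : Capacity (boolCapacity z) := by
  refine ⟨fun B => ?_, fun B C hBC => ?_, by simp [boolCapacity], by simp [boolCapacity]⟩
  · unfold boolCapacity
    split_ifs <;> simp [hz.1, hz.2]
  · have := @hBC true
    have := @hBC false
    unfold boolCapacity
    split_ifs <;> simp_all [hz.1, hz.2]

theorem stmt3 (S : ℝ → ℝ → ℝ) (hS : Semicopula S) :
    (∀ (X : Type) (μ : Set X → ℝ), Capacity μ → ∀ (A : Set X) (f : X → ℝ),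
        (∀ x, f x ∈ Icc (0:ℝ) 1) → ∀ a ∈ Icc (0:ℝ) 1,
        (∀ x, f x + a ∈ Icc (0:ℝ) 1) →
        genInt S μ (A.indicator (fun x => f x + a)) ≤
          genInt S μ (A.indicator f) + genInt S μ (A.indicator (fun _ => a))) ↔
    (∀ x ∈ Icc (0:ℝ) 1, ∀ y ∈ Icc (0:ℝ) 1, ∀ z ∈ Icc (0:ℝ) 1, x + y ≤ 1 →
        S (x + y) z ≤ S x z + S y z) := by
  refine ⟨fun h x hx y hy z hz hxy => ?_,
    fun hadd X μ hμ A f _ a ha _ => genInt_indicator_add_const_le hS hμ hadd A f ha⟩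
  have hxy' : x + y ∈ Icc (0:ℝ) 1 := ⟨add_nonneg hx.1 hy.1, hxy⟩
  have hμ := capacity_boolCapacity hz
  have hz' : boolCapacity z {true} = z := by simp [boolCapacity]
  have key := h Bool (boolCapacity z) hμ {true} (fun _ => x) (fun _ => hx) y hy fun _ => hxy'
  rwa [genInt_indicator_const hS hμ _ hxy', genInt_indicator_const hS hμ _ hx,
    genInt_indicator_const hS hμ _ hy, hz'] at key
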